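/- Assume κ = κ̂ and 0 < λ < 1, and denote by F_C and G_V the partial derivatives ∂F/∂C and ∂G/∂V at P₈ = (V₊, 1+V₊). Then F_C + G_V = C₈(n + 1 - ((γ+1)/(γ-1))μ) > 0, where C₈ = 1+V₊ and μ = λ-1. -/

import Mathlib

noncomputable section

/-- `V_* = (κ - 2(λ-1))/(nγ)` -/
def Vstar (n γ lam κ : ℝ) : ℝ := (κ - 2*(lam - 1)) / (n*γ)

/-- `α = (κ(γ-1) + 2(λ-1))/(2γ)` -/
def alphaP (γ lam κ : ℝ) : ℝ := (κ*(γ - 1) + 2*(lam - 1)) / (2*γ)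

/-- `k₁ = 1 + (n-1)(γ-1)/2` -/
def K1 (n γ : ℝ) : ℝ := 1 + (n - 1)*(γ - 1)/2

/-- `k₂ = ((n-1)(γ-1) + (γ-3)(λ-1))/2` -/
def K2 (n γ lam : ℝ) : ℝ := ((n - 1)*(γ - 1) + (γ - 3)*(lam - 1)) / 2

/-- `k₃ = (γ-1)(λ-1)/2` -/
def K3 (γ lam : ℝ) : ℝ := (γ - 1)*(lam - 1)/2

/-- `G(V,C) = nC²(V - V_*) - V(1+V)(λ+V)` -/
def Gf (n γ lam κ V C : ℝ) : ℝ := n*C^2*(V - Vstar n γ lam κ) - V*(1+V)*(lam+V)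

/-- `F(V,C) = C[C²(1 + α/(1+V)) - k₁(1+V)² + k₂(1+V) - k₃]` -/
def Ff (n γ lam κ V C : ℝ) : ℝ :=
  C*(C^2*(1 + alphaP γ lam κ/(1+V)) - K1 n γ*(1+V)^2 + K2 n γ lam*(1+V) - K3 γ lam)

/-- The isentropic exponent `κ̂ = 2(1-λ)/(γ-1)`. -/
def khat (γ lam : ℝ) : ℝ := 2*(1 - lam)/(γ - 1)

/-- `a = ((γ-3)/(m(γ-1)))μ - 1`, with `m = n-1`, `μ = λ-1`. -/
def aIs (n γ lam : ℝ) : ℝ := ((γ - 3)/((n-1)*(γ - 1)))*(lam - 1) - 1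

/-- `Q = ((γ-3)/(m(γ-1)))²μ² - 2((γ+1)/(m(γ-1)))μ + 1`. -/
def QIs (n γ lam : ℝ) : ℝ :=
  ((γ - 3)/((n-1)*(γ - 1)))^2*(lam - 1)^2 - 2*((γ + 1)/((n-1)*(γ - 1)))*(lam - 1) + 1

/-- `V₊ = (a + √Q)/2` in the isentropic case `κ = κ̂`. -/
def VpIs (n γ lam : ℝ) : ℝ := (aIs n γ lam + Real.sqrt (QIs n γ lam))/2

/-- `V₋ = (a - √Q)/2` in the isentropic case `κ = κ̂`. -/
def VmIs (n γ lam : ℝ) : ℝ := (aIs n γ lam - Real.sqrt (QIs n γ lam))/2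

/-- `F_C`: the partial derivative `∂F/∂C` at `P₈ = (V₊, 1+V₊)`, with `κ = κ̂`. -/
def FCd (n γ lam : ℝ) : ℝ :=
  deriv (fun C => Ff n γ lam (khat γ lam) (VpIs n γ lam) C) (1 + VpIs n γ lam)

/-- `F_V`: the partial derivative `∂F/∂V` at `P₈ = (V₊, 1+V₊)`, with `κ = κ̂`. -/
def FVd (n γ lam : ℝ) : ℝ :=
  deriv (fun V => Ff n γ lam (khat γ lam) V (1 + VpIs n γ lam)) (VpIs n γ lam)

/-- `G_C`: the partial derivative `∂G/∂C` at `P₈ = (V₊, 1+V₊)`, with `κ = κ̂`. -/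
def GCd (n γ lam : ℝ) : ℝ :=
  deriv (fun C => Gf n γ lam (khat γ lam) (VpIs n γ lam) C) (1 + VpIs n γ lam)

/-- `G_V`: the partial derivative `∂G/∂V` at `P₈ = (V₊, 1+V₊)`, with `κ = κ̂`. -/
def GVd (n γ lam : ℝ) : ℝ :=
  deriv (fun V => Gf n γ lam (khat γ lam) V (1 + VpIs n γ lam)) (VpIs n γ lam)

/-!
For `κ = κ̂` the coefficient `α` vanishes, so `F` and `G` are cubic polynomials and `F_C`, `G_V`
at `P₈` are explicit polynomials in `V₊`. Now `Q = a² - 8μ/(m(γ-1))`, so `V₊` is a root of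
`V² - aV + 2μ/(m(γ-1))`, and modulo this quadratic `F_C + G_V` reduces to
`C₈(n + 1 - ((γ+1)/(γ-1))μ)`. For positivity, `Q = (a+2)² - 4μ/m > (a+2)²` because `μ < 0`,
hence `2C₈ = a + 2 + √Q > 0`; the second factor is positive since `μ < 0`.
-/

theorem hasDerivAt_Ff_C (n γ lam κ V C : ℝ) :
    HasDerivAt (fun C => Ff n γ lam κ V C)
      (3*C^2*(1 + alphaP γ lam κ/(1+V)) - K1 n γ*(1+V)^2 + K2 n γ lam*(1+V) - K3 γ lam) C := by
  set β := 1 + alphaP γ lam κ/(1+V)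
  set r := -(K1 n γ*(1+V)^2) + K2 n γ lam*(1+V) - K3 γ lam
  have hF : (fun C => Ff n γ lam κ V C) = fun C => C^3*β + C*r := by
    funext C; simp only [Ff, β, r]; ring
  rw [hF]
  exact (((hasDerivAt_pow 3 C).mul_const β).add ((hasDerivAt_id C).mul_const r)).congr_deriv
    (by simp only [r]; ring)

theorem hasDerivAt_Gf_V (n γ lam κ V C : ℝ) :
    HasDerivAt (fun V => Gf n γ lam κ V C) (n*C^2 - (3*V^2 + 2*(1+lam)*V + lam)) V := by
  have hG : (fun V => Gf n γ lam κ V C)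
      = fun V => (n*C^2 - lam)*V - (V^3 + (1+lam)*V^2) - n*C^2*Vstar n γ lam κ := by
    funext V; simp only [Gf]; ring
  rw [hG]
  exact ((((hasDerivAt_id V).const_mul (n*C^2 - lam)).sub ((hasDerivAt_pow 3 V).add
    ((hasDerivAt_pow 2 V).const_mul (1+lam)))).sub_const _).congr_deriv (by ring)

theorem alphaP_khat {γ : ℝ} (hγ : γ ≠ 1) (lam : ℝ) : alphaP γ lam (khat γ lam) = 0 := by
  have : γ - 1 ≠ 0 := sub_ne_zero.mpr hγ
  simp only [alphaP, khat]
  field_simp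
  ring

theorem FCd_eq {γ : ℝ} (hγ : γ ≠ 1) (n lam : ℝ) :
    FCd n γ lam = (3 - K1 n γ)*(1 + VpIs n γ lam)^2 + K2 n γ lam*(1 + VpIs n γ lam) - K3 γ lam := by
  rw [FCd, (hasDerivAt_Ff_C _ _ _ _ _ _).deriv, alphaP_khat hγ]
  ring

theorem GVd_eq (n γ lam : ℝ) :
    GVd n γ lam = n*(1 + VpIs n γ lam)^2
      - (3*VpIs n γ lam^2 + 2*(1+lam)*VpIs n γ lam + lam) :=
  (hasDerivAt_Gf_V _ _ _ _ _ _).deriv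

theorem QIs_eq_discrim (n γ lam : ℝ) :
    QIs n γ lam = aIs n γ lam^2 - 4*(2*(lam - 1)/((n-1)*(γ - 1))) := by
  simp only [QIs, aIs]
  ring

theorem QIs_eq_sq_aIs_add_two {n γ : ℝ} (hn : n ≠ 1) (hγ : γ ≠ 1) (lam : ℝ) :
    QIs n γ lam = (aIs n γ lam + 2)^2 - 4*(lam - 1)/(n - 1) := by
  have : n - 1 ≠ 0 := sub_ne_zero.mpr hn
  have : γ - 1 ≠ 0 := sub_ne_zero.mpr hγ
  rw [QIs_eq_discrim, aIs]
  field_simp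
  ring

theorem sq_aIs_add_two_lt_QIs {n γ lam : ℝ} (hn : 1 < n) (hγ : 1 < γ) (hlam : lam < 1) :
    (aIs n γ lam + 2)^2 < QIs n γ lam := by
  rw [QIs_eq_sq_aIs_add_two hn.ne' hγ.ne']
  have : 4*(lam - 1)/(n - 1) < 0 := div_neg_of_neg_of_pos (by linarith) (by linarith)
  linarith

theorem VpIs_isRoot {n γ lam : ℝ} (hQ : 0 ≤ QIs n γ lam) :
    VpIs n γ lam^2 - aIs n γ lam*VpIs n γ lam + 2*(lam - 1)/((n-1)*(γ - 1)) = 0 := by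
  have hs : Real.sqrt (QIs n γ lam)^2 = aIs n γ lam^2 - 4*(2*(lam - 1)/((n-1)*(γ - 1))) := by
    rw [Real.sq_sqrt hQ, QIs_eq_discrim]
  rw [VpIs]
  linear_combination hs/4

theorem one_add_VpIs_pos {n γ lam : ℝ} (hn : 1 < n) (hγ : 1 < γ) (hlam : lam < 1) :
    0 < 1 + VpIs n γ lam := by
  have := Real.neg_sqrt_lt_of_sq_lt (sq_aIs_add_two_lt_QIs hn hγ hlam)
  rw [VpIs]
  linarith

theorem FCd_add_GVd {n γ lam : ℝ} (hn : 1 < n) (hγ : 1 < γ) (hlam : lam < 1) :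
    FCd n γ lam + GVd n γ lam = (1 + VpIs n γ lam)*(n + 1 - ((γ+1)/(γ-1))*(lam - 1)) := by
  have hQ := (sq_nonneg _).trans (sq_aIs_add_two_lt_QIs hn hγ hlam).le
  have hroot := VpIs_isRoot hQ
  have : n - 1 ≠ 0 := by linarith
  have : γ - 1 ≠ 0 := by linarith
  rw [FCd_eq hγ.ne', GVd_eq]
  simp only [K1, K2, K3, aIs] at hroot ⊢
  field_simp at hroot ⊢
  linear_combination (3 - γ) * hroot

theorem stmt_15_general (n γ lam : ℝ) (hn : n = 2 ∨ n = 3) (hγ : 1 < γ)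
    (h1 : lam < 1) :
    let C8 := 1 + VpIs n γ lam
    FCd n γ lam + GVd n γ lam = C8*(n + 1 - ((γ+1)/(γ-1))*(lam - 1)) ∧
    0 < FCd n γ lam + GVd n γ lam := by
  intro C8
  have hn1 : 1 < n := by rcases hn with rfl | rfl <;> norm_num
  have hsum := FCd_add_GVd hn1 hγ h1
  have hfactor : 0 < n + 1 - ((γ+1)/(γ-1))*(lam - 1) := by
    have : 0 < (γ+1)/(γ-1) := div_pos (by linarith) (by linarith)
    nlinarith
  exact ⟨hsum, hsum ▸ mul_pos (one_add_VpIs_pos hn1 hγ h1) hfactor⟩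

/-- with `κ = κ̂` and `0 < λ < 1`, at `P₈ = (V₊, 1+V₊)`:
`F_C + G_V = C₈(n + 1 - ((γ+1)/(γ-1))μ) > 0`, where `μ = λ - 1`. -/
theorem stmt_15 (n γ lam : ℝ) (hn : n = 2 ∨ n = 3) (hγ : 1 < γ)
    (h0 : 0 < lam) (h1 : lam < 1) :
    let C8 := 1 + VpIs n γ lam
    FCd n γ lam + GVd n γ lam = C8*(n + 1 - ((γ+1)/(γ-1))*(lam - 1)) ∧
    0 < FCd n γ lam + GVd n γ lam :=
  stmt_15_general n γ lam hn hγ h1
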